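/- Graph-theoretic condition for consensus: the solution φ(t,x0) of the CTWM dynamics converges to a consensus equilibrium (a vector of the form c·1_n) for every initial condition x0 ∈ ℝ^n if and only if V is the only maximal cohesive set of G(W). -/

import Mathlib

open Finset Filter Topology

/-- `m` is a weighted median of the values `x` with respect to weights `w`. -/
def IsWeightedMedian {n : ℕ} (x w : Fin n → ℝ) (m : ℝ) : Prop :=
  (∃ i, x i = m) ∧
  ∑ i ∈ univ.filter (fun i => x i < m), w i ≤ 1 / 2 ∧
  ∑ i ∈ univ.filter (fun i => m < x i), w i ≤ 1 / 2

/-- `W` is a row-stochastic matrix. -/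
def RowStochastic {n : ℕ} (W : Matrix (Fin n) (Fin n) ℝ) : Prop :=
  (∀ i j, 0 ≤ W i j) ∧ ∀ i, ∑ j, W i j = 1

/-- `M` is a cohesive set of the influence network `G(W)`. -/
def Cohesive {n : ℕ} (W : Matrix (Fin n) (Fin n) ℝ) (M : Finset (Fin n)) : Prop :=
  ∀ i ∈ M, (1 : ℝ) / 2 ≤ ∑ j ∈ M, W i j

/-- `M` is a maximal cohesive set of the influence network `G(W)`. -/
def MaxCohesive {n : ℕ} (W : Matrix (Fin n) (Fin n) ℝ) (M : Finset (Fin n)) : Prop :=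
  Cohesive W M ∧ ∀ i ∉ M, ¬ ((1 : ℝ) / 2 < ∑ j ∈ M, W i j)

/-- `Med` is the weighted-median operator: `Med x i` is the weighted median of `x`
with respect to the `i`-th row of `W` that is closest to `x i`. -/
def IsMedSelection {n : ℕ} (W : Matrix (Fin n) (Fin n) ℝ)
    (Med : (Fin n → ℝ) → Fin n → ℝ) : Prop :=
  ∀ x i, IsWeightedMedian x (W i) (Med x i) ∧
    ∀ m, IsWeightedMedian x (W i) m → |Med x i - x i| ≤ |m - x i|

/-- `φ` is the solution map of the ODE `ẋ = g(x)`: `φ x0` is the solution starting at `x0`. -/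
def IsFlow {n : ℕ} (g : (Fin n → ℝ) → (Fin n → ℝ))
    (φ : (Fin n → ℝ) → ℝ → (Fin n → ℝ)) : Prop :=
  ∀ x, φ x 0 = x ∧ ∀ t : ℝ, HasDerivAt (φ x) (g (φ x t)) t

/-- `order^{≤ r}(x)`: indices whose value is among the `r` largest distinct values of `x`. -/
noncomputable def orderLe {n : ℕ} (x : Fin n → ℝ) (r : ℕ) : Finset (Fin n) :=
  univ.filter (fun i => ((univ.image x).filter (fun v => x i < v)).card < r)

/-- The set of equilibria of the CTWM dynamics. -/
def Xeq {n : ℕ} (W : Matrix (Fin n) (Fin n) ℝ) : Set (Fin n → ℝ) :=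
  {x | ∀ r : ℕ, 1 ≤ r → r ≤ (univ.image x).card → MaxCohesive W (orderLe x r)}

/-- The ω-limit set of a trajectory `φ`. -/
def omegaLimitSet {n : ℕ} (φ : ℝ → (Fin n → ℝ)) : Set (Fin n → ℝ) :=
  {z | ∃ u : ℕ → ℝ, Tendsto u atTop atTop ∧ Tendsto (fun k => φ (u k)) atTop (𝓝 z)}

/-!
If `M ≠ V` is maximal cohesive, `Mᶜ` is cohesive too. On a cohesive set the minimum of a solution
never decreases, since a minimizing node has at least half of its weight at values not below its
own; dually the maximum never increases. Started from the indicator of `M`, the trajectory keeps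
`M` at `≥ 1` and `Mᶜ` at `≤ 0`.

Conversely, let `V` be the only maximal cohesive set. The global minimum increases to some `α`,
the global maximum decreases to some `β`. A cohesive set `S` lying below `c < β` stays there, and a
node `k ∉ S` with more than half of its weight in `S` has median `≤ c`, so it is pulled
exponentially close to `c`, while `insert k S` is again cohesive; growing `S` up to `V` would push
the global maximum below `β`. Hence every cohesive set always has a node at `≥ β`. The dynamics is
nonexpansive in the sup norm, so the solution started from an ω-limit point is the limit of shifted
trajectories and stays `≥ α`. Its nodes at level `α` are at a minimum in time, hence at their
median: they form a cohesive set that the original trajectory approaches, so `β ≤ α`.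
-/

variable {n : ℕ}

lemma sum_filter_le_sum_filter {w : Fin n → ℝ} (hw : ∀ j, 0 ≤ w j) {p q : Fin n → Prop}
    [DecidablePred p] [DecidablePred q] (hpq : ∀ j, p j → q j) :
    ∑ j ∈ univ.filter p, w j ≤ ∑ j ∈ univ.filter q, w j :=
  sum_le_sum_of_subset_of_nonneg (monotone_filter_right _ fun j _ => hpq j) fun j _ _ => hw j

section WeightedMedian

variable {x y w : Fin n → ℝ} {a b c m μ ν : ℝ}

lemma IsWeightedMedian.neg (h : IsWeightedMedian x w m) : IsWeightedMedian (-x) w (-m) := by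
  obtain ⟨⟨i, hi⟩, hlt, hgt⟩ := h
  refine ⟨⟨i, by simp [hi]⟩, ?_, ?_⟩
  · simpa only [Pi.neg_apply, neg_lt_neg_iff] using hgt
  · simpa only [Pi.neg_apply, neg_lt_neg_iff] using hlt

lemma IsWeightedMedian.of_le_of_le (hw : ∀ j, 0 ≤ w j) (ha : IsWeightedMedian x w a)
    (hb : IsWeightedMedian x w b) {i : Fin n} (hai : a ≤ x i) (hib : x i ≤ b) :
    IsWeightedMedian x w (x i) :=
  ⟨⟨i, rfl⟩, (sum_filter_le_sum_filter hw fun _ hj => hj.trans_le hib).trans hb.2.1,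
    (sum_filter_le_sum_filter hw fun _ hj => hai.trans_lt hj).trans ha.2.2⟩

lemma IsWeightedMedian.le_of_half_lt_sum (hw : ∀ j, 0 ≤ w j) (h : IsWeightedMedian x w m)
    (hc : 1 / 2 < ∑ j ∈ univ.filter (fun j => x j ≤ c), w j) : m ≤ c := by
  by_contra! hcm
  exact (hc.trans_le (sum_filter_le_sum_filter hw fun _ hj => hj.trans_lt hcm)).not_ge h.2.1

lemma IsWeightedMedian.exists_le_add (hw : ∀ j, 0 ≤ w j) (hxy : ∀ j, x j ≤ y j + m)
    (hy : IsWeightedMedian y w μ) (hx : IsWeightedMedian x w ν) :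
    ∃ ν', IsWeightedMedian x w ν' ∧ ν' ≤ μ + m := by
  rcases le_or_gt ν (μ + m) with h | h
  · exact ⟨ν, hx, h⟩
  -- the largest value of `x` not exceeding `μ + m` is a median
  obtain ⟨j₁, hj₁⟩ := hy.1
  have hA : (univ.filter fun j => x j ≤ μ + m).Nonempty :=
    ⟨j₁, mem_filter.2 ⟨mem_univ _, hj₁ ▸ hxy j₁⟩⟩
  obtain ⟨j₀, hj₀A, hj₀⟩ := exists_max_image _ x hA
  have hj₀' : x j₀ ≤ μ + m := (mem_filter.1 hj₀A).2
  refine ⟨x j₀, ⟨⟨j₀, rfl⟩, ?_, ?_⟩, hj₀'⟩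
  · exact (sum_filter_le_sum_filter hw fun _ hj => hj.trans (hj₀'.trans_lt h)).trans hx.2.1
  · refine (sum_filter_le_sum_filter hw fun j hj => ?_).trans hy.2.2
    by_contra! hyj
    linarith [hj₀ j (mem_filter.2 ⟨mem_univ _, by linarith [hxy j]⟩), hxy j]

end WeightedMedian

section MedSelection

variable {W : Matrix (Fin n) (Fin n) ℝ} {Med : (Fin n → ℝ) → Fin n → ℝ}
  {x y : Fin n → ℝ} {i : Fin n} {m : ℝ}

-- Through this mirror selection, every lower-bound statement yields its upper-bound counterpart.
lemma IsMedSelection.neg (hMed : IsMedSelection W Med) :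
    IsMedSelection W (fun x => -Med (-x)) := by
  intro x i
  obtain ⟨hmed, hclose⟩ := hMed (-x) i
  refine ⟨by simpa using hmed.neg, fun m hm => ?_⟩
  have := hclose (-m) (by simpa using hm.neg)
  rw [← abs_neg, ← abs_neg (m - x i)]
  convert this using 2 <;> simp only [Pi.neg_apply] <;> ring

lemma IsMedSelection.eq_of_isWeightedMedian_self (hMed : IsMedSelection W Med)
    (h : IsWeightedMedian x (W i) (x i)) : Med x i = x i := by
  simpa [sub_eq_zero] using (hMed x i).2 _ h

lemma IsMedSelection.self_le_of_sum_lt_le (hW : RowStochastic W) (hMed : IsMedSelection W Med)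
    (h : ∑ j ∈ univ.filter (fun j => x j < x i), W i j ≤ 1 / 2) : x i ≤ Med x i := by
  by_contra! hlt
  refine hlt.ne (hMed.eq_of_isWeightedMedian_self ⟨⟨i, rfl⟩, h, ?_⟩)
  exact (sum_filter_le_sum_filter (hW.1 i) fun _ hj => hlt.trans hj).trans (hMed x i).1.2.2

lemma IsMedSelection.le_of_lt (hW : RowStochastic W) (hMed : IsMedSelection W Med)
    (hlt : x i < Med x i) (hm : IsWeightedMedian x (W i) m) : Med x i ≤ m := by
  by_contra! hm'
  rcases le_or_gt (x i) m with h | h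
  · have := (hMed x i).2 m hm
    rw [abs_of_pos (sub_pos.2 hlt), abs_of_nonneg (sub_nonneg.2 h)] at this
    linarith
  · have := hMed.eq_of_isWeightedMedian_self (hm.of_le_of_le (hW.1 i) (hMed x i).1 h.le hlt.le)
    linarith

lemma IsMedSelection.sub_le_sub_of_lt (hW : RowStochastic W) (hMed : IsMedSelection W Med)
    (hxy : ∀ j, x j - y j ≤ x i - y i) (hlt : x i < Med x i) :
    Med x i - x i ≤ Med y i - y i := by
  obtain ⟨ν, hν, hνle⟩ := (hMed y i).1.exists_le_add (m := x i - y i) (hW.1 i)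
    (fun j => by linarith [hxy j]) (hMed x i).1
  linarith [hMed.le_of_lt hW hlt hν]

lemma IsMedSelection.sub_le_sub (hW : RowStochastic W) (hMed : IsMedSelection W Med)
    (hxy : ∀ j, x j - y j ≤ x i - y i) : Med x i - x i ≤ Med y i - y i := by
  rcases lt_or_ge (x i) (Med x i) with hx | hx
  · exact hMed.sub_le_sub_of_lt hW hxy hx
  rcases lt_or_ge (Med y i) (y i) with hy | hy
  · -- the first case for the mirror selection and the pair `(-y, -x)`
    have := hMed.neg.sub_le_sub_of_lt hW (x := -y) (y := -x)
      (fun j => by simp only [Pi.neg_apply]; linarith [hxy j]) (by simpa using hy)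
    simp only [Pi.neg_apply, neg_neg] at this
    linarith
  · linarith

end MedSelection

section Cohesive

variable {W : Matrix (Fin n) (Fin n) ℝ} {M S : Finset (Fin n)}

lemma RowStochastic.sum_compl (hW : RowStochastic W) (M : Finset (Fin n)) (i : Fin n) :
    ∑ j ∈ Mᶜ, W i j = 1 - ∑ j ∈ M, W i j := by
  rw [← hW.2 i, ← sum_compl_add_sum M]
  ring

lemma RowStochastic.cohesive_univ (hW : RowStochastic W) : Cohesive W univ := fun i _ => by
  rw [hW.2 i]
  norm_num

lemma MaxCohesive.cohesive_compl (hW : RowStochastic W) (h : MaxCohesive W M) :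
    Cohesive W Mᶜ := fun i hi => by
  have := not_lt.1 (h.2 i (mem_compl.1 hi))
  rw [hW.sum_compl]
  linarith

lemma Cohesive.insert (hW : RowStochastic W) (hS : Cohesive W S) {k : Fin n}
    (hk : 1 / 2 ≤ ∑ j ∈ S, W k j) : Cohesive W (insert k S) := by
  intro i hi
  refine le_trans ?_ (sum_le_sum_of_subset_of_nonneg (subset_insert k S) fun j _ _ => hW.1 i j)
  rcases mem_insert.1 hi with rfl | hi
  · exact hk
  · exact hS i hi

lemma Cohesive.exists_of_not_maxCohesive (hS : Cohesive W S) (h : ¬ MaxCohesive W S) :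
    ∃ k ∉ S, 1 / 2 < ∑ j ∈ S, W k j := by
  simpa [MaxCohesive, hS] using h

lemma Cohesive.self_le_med {Med : (Fin n → ℝ) → Fin n → ℝ} (hW : RowStochastic W)
    (hMed : IsMedSelection W Med) (hS : Cohesive W S) {x : Fin n → ℝ} {i : Fin n} (hi : i ∈ S)
    (hmin : ∀ j ∈ S, x i ≤ x j) : x i ≤ Med x i := by
  refine hMed.self_le_of_sum_lt_le hW ?_
  have hsub : ∑ j ∈ univ.filter (fun j => x j < x i), W i j ≤ ∑ j ∈ Sᶜ, W i j :=
    sum_le_sum_of_subset_of_nonneg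
      (fun j hj => mem_compl.2 fun hjS => (mem_filter.1 hj).2.not_ge (hmin j hjS))
      fun j _ _ => hW.1 i j
  rw [hW.sum_compl] at hsub
  linarith [hS i hi]

end Cohesive

lemma HasDerivAt.eventually_sub_mul_lt {f : ℝ → ℝ} {d c r x : ℝ} (hf : HasDerivAt f d x)
    (hc : c ≤ f x) (hd : c = f x → 0 ≤ d) (hr : 0 < r) :
    ∀ᶠ z in 𝓝[>] x, c - r * (z - x) < f z := by
  rcases hc.lt_or_eq with hc | rfl
  · filter_upwards [nhdsWithin_le_nhds (hf.continuousAt.eventually (lt_mem_nhds hc)),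
      self_mem_nhdsWithin] with z hz hxz
    nlinarith [mul_pos hr (sub_pos.2 (Set.mem_Ioi.1 hxz))]
  · have hslope : Tendsto (slope f x) (𝓝[>] x) (𝓝 d) :=
      (hasDerivWithinAt_iff_tendsto_slope' (lt_irrefl x)).1 hf.hasDerivWithinAt
    filter_upwards [hslope.eventually (lt_mem_nhds (by linarith [hd rfl] : -r < d)),
      self_mem_nhdsWithin] with z hz hxz
    rw [slope_def_field, lt_div_iff₀ (sub_pos.2 (Set.mem_Ioi.1 hxz))] at hz
    linarith

lemma Finset.inf'_le_inf'_of_hasDerivAt {ι : Type*} {s : Finset ι} (hs : s.Nonempty)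
    {f d : ι → ℝ → ℝ} {a b : ℝ} (hf : ∀ i ∈ s, ∀ t, HasDerivAt (f i) (d i t) t)
    (hd : ∀ t, a ≤ t → ∀ i ∈ s, (∀ j ∈ s, f i t ≤ f j t) → 0 ≤ d i t) (hab : a ≤ b) :
    s.inf' hs (f · a) ≤ s.inf' hs (f · b) := by
  set g := fun t => s.inf' hs (f · t)
  have hg : Continuous g := continuous_iff_continuousAt.2 fun t =>
    ContinuousAt.finset_inf'_apply hs fun i hi => (hf i hi t).continuousAt
  have hslope : ∀ x ∈ Set.Ico a b, ∀ r, (0 : ℝ) < r → ∃ᶠ z in 𝓝[>] x, slope (-g) x z < r := by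
    intro x hx r hr
    have hall : ∀ᶠ z in 𝓝[>] x, ∀ i ∈ s, g x - r * (z - x) < f i z :=
      (eventually_all_finset s).2 fun i hi => (hf i hi x).eventually_sub_mul_lt (s.inf'_le _ hi)
        (fun h => hd x hx.1 i hi fun j hj => h ▸ s.inf'_le _ hj) hr
    refine (hall.and self_mem_nhdsWithin).mono (fun z ⟨hz, hxz⟩ => ?_) |>.frequently
    have hgz : g x - r * (z - x) < g z := (lt_inf'_iff hs).2 hz
    rw [slope_def_field, div_lt_iff₀ (sub_pos.2 (Set.mem_Ioi.1 hxz))]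
    simp only [Pi.neg_apply]
    linarith
  have := image_le_of_liminf_slope_right_le_deriv_boundary (B := fun _ => -g a)
    (B' := fun _ => 0) hg.neg.continuousOn le_rfl continuousOn_const
    (fun x _ => hasDerivWithinAt_const _ _ _) hslope (Set.right_mem_Icc.2 hab)
  show g a ≤ g b
  simpa using this

section Solutions

def IsSolution (Med : (Fin n → ℝ) → Fin n → ℝ) (u : ℝ → Fin n → ℝ) : Prop :=
  ∀ t, HasDerivAt u (Med (u t) - u t) t

variable {W : Matrix (Fin n) (Fin n) ℝ} {Med : (Fin n → ℝ) → Fin n → ℝ} {u v : ℝ → Fin n → ℝ}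

lemma IsFlow.isSolution {φ : (Fin n → ℝ) → ℝ → (Fin n → ℝ)}
    (hφ : IsFlow (fun x => Med x - x) φ) (x : Fin n → ℝ) : IsSolution Med (φ x) :=
  (hφ x).2

lemma IsSolution.hasDerivAt_apply (hu : IsSolution Med u) (i : Fin n) (t : ℝ) :
    HasDerivAt (fun s => u s i) (Med (u t) i - u t i) t :=
  hasDerivAt_pi.1 (hu t) i

lemma IsSolution.comp_const_add (hu : IsSolution Med u) (a : ℝ) :
    IsSolution Med (fun s => u (a + s)) := fun t =>
  (hu (a + t)).comp_const_add a t

lemma IsSolution.neg (hu : IsSolution Med u) :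
    IsSolution (fun x => -Med (-x)) (fun t => -u t) := fun t => by
  refine (hu t).neg.congr_deriv ?_
  simp only [neg_neg, neg_sub, sub_neg_eq_add]
  abel

lemma IsSolution.eventually_le_add_of_med_le (hu : IsSolution Med u) {k : Fin n} {c T : ℝ}
    (hmed : ∀ t ≥ T, Med (u t) k ≤ c) {ε : ℝ} (hε : 0 < ε) :
    ∀ᶠ t in atTop, u t k ≤ c + ε := by
  have hf : ∀ t, HasDerivAt (fun s => u s k - c) (Med (u t) k - u t k) t :=
    fun t => (hu.hasDerivAt_apply k t).sub_const c
  have hbound : ∀ t ≥ T, u t k - c ≤ (u T k - c) * Real.exp (-1 * (t - T)) := by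
    intro t ht
    have := le_gronwallBound_of_liminf_deriv_right_le (f := fun s => u s k - c)
      (K := -1) (ε := 0)
      (fun s _ => (hf s).continuousAt.continuousWithinAt)
      (fun s _ r hr => (hf s).hasDerivWithinAt.liminf_right_slope_le hr) le_rfl
      (fun s hs => by linarith [hmed s hs.1]) t (Set.right_mem_Icc.2 ht)
    rwa [gronwallBound_ε0] at this
  have hlim : Tendsto (fun t => (u T k - c) * Real.exp (-1 * (t - T))) atTop (𝓝 0) := by
    have : Tendsto (fun t : ℝ => -1 * (t - T)) atTop atBot :=
      (tendsto_atTop_add_const_right _ (-T) tendsto_id).const_mul_atTop_of_neg (by norm_num)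
    simpa using (Real.tendsto_exp_atBot.comp this).const_mul (u T k - c)
  filter_upwards [hlim.eventually_lt_const hε, eventually_ge_atTop T] with t h1 h2
  linarith [hbound t h2]

variable (hW : RowStochastic W) (hMed : IsMedSelection W Med)
include hW hMed

lemma IsSolution.le_apply_of_cohesive (hu : IsSolution Med u) {S : Finset (Fin n)}
    (hS : Cohesive W S) {c s t : ℝ} (hst : s ≤ t) (hc : ∀ j ∈ S, c ≤ u s j) {i : Fin n}
    (hi : i ∈ S) : c ≤ u t i := by
  have hS' : S.Nonempty := ⟨i, hi⟩
  have := inf'_le_inf'_of_hasDerivAt hS' (f := fun j τ => u τ j)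
    (fun j _ => hu.hasDerivAt_apply j)
    (fun τ _ j hj hmin => sub_nonneg.2 (hS.self_le_med hW hMed hj hmin)) hst
  exact (le_inf' hS' _ hc).trans (this.trans (inf'_le _ hi))

lemma IsSolution.apply_le_of_cohesive (hu : IsSolution Med u) {S : Finset (Fin n)}
    (hS : Cohesive W S) {c s t : ℝ} (hst : s ≤ t) (hc : ∀ j ∈ S, u s j ≤ c) {i : Fin n}
    (hi : i ∈ S) : u t i ≤ c := by
  have := hu.neg.le_apply_of_cohesive hW hMed.neg hS hst (c := -c)
    (fun j hj => by simpa using hc j hj) hi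
  simpa using this

lemma IsSolution.sub_le_dist (hu : IsSolution Med u) (hv : IsSolution Med v) {s t : ℝ}
    (hst : s ≤ t) (i : Fin n) : u t i - v t i ≤ dist (u s) (v s) := by
  have hne : (univ : Finset (Fin n)).Nonempty := ⟨i, mem_univ i⟩
  have hmono := inf'_le_inf'_of_hasDerivAt hne (f := fun j τ => v τ j - u τ j)
    (fun j _ τ => (hv.hasDerivAt_apply j τ).sub (hu.hasDerivAt_apply j τ))
    (fun τ _ j _ hmin => sub_nonneg.2 <| hMed.sub_le_sub hW fun k => by
      linarith [hmin k (mem_univ k)]) hst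
  have hs : ∀ j ∈ univ, -dist (u s) (v s) ≤ v s j - u s j := fun j _ => by
    have := dist_le_pi_dist (u s) (v s) j
    rw [Real.dist_eq] at this
    linarith [le_abs_self (u s j - v s j)]
  linarith [(le_inf' hne _ hs).trans (hmono.trans (inf'_le _ (mem_univ i)))]

lemma IsSolution.dist_le_dist (hu : IsSolution Med u) (hv : IsSolution Med v) {s t : ℝ}
    (hst : s ≤ t) : dist (u t) (v t) ≤ dist (u s) (v s) :=
  (dist_pi_le_iff dist_nonneg).2 fun i => by
    rw [Real.dist_eq, abs_sub_le_iff]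
    exact ⟨hu.sub_le_dist hW hMed hv hst i,
      (hv.sub_le_dist hW hMed hu hst i).trans_eq (dist_comm _ _)⟩

lemma IsSolution.tendsto_of_tendsto_zero {ι : Type*} {l : Filter ι} {w : ι → ℝ → Fin n → ℝ}
    (hv : IsSolution Med v) (hw : ∀ k, IsSolution Med (w k))
    (h0 : Tendsto (fun k => w k 0) l (𝓝 (v 0))) {s : ℝ} (hs : 0 ≤ s) :
    Tendsto (fun k => w k s) l (𝓝 (v s)) := by
  rw [tendsto_iff_dist_tendsto_zero] at h0 ⊢
  exact squeeze_zero (fun _ => dist_nonneg) (fun k => (hw k).dist_le_dist hW hMed hv hs) h0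

theorem IsSolution.eventually_le_of_cohesive
    (hmax : ∀ M : Finset (Fin n), M.Nonempty → MaxCohesive W M → M = univ)
    (hu : IsSolution Med u) {S : Finset (Fin n)} (hS : S.Nonempty) (hcoh : Cohesive W S)
    {c T : ℝ} (hc : ∀ t ≥ T, ∀ j ∈ S, u t j ≤ c) {ε : ℝ} (hε : 0 < ε) :
    ∀ᶠ t in atTop, ∀ j, u t j ≤ c + ε := by
  by_cases hSu : S = univ
  · filter_upwards [eventually_ge_atTop T] with t ht j
    linarith [hc t ht j (hSu ▸ mem_univ j)]
  obtain ⟨k, hkS, hk⟩ := hcoh.exists_of_not_maxCohesive fun h => hSu (hmax S hS h)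
  have hmed : ∀ t ≥ T, Med (u t) k ≤ c := fun t ht =>
    (hMed (u t) k).1.le_of_half_lt_sum (hW.1 k) <| hk.trans_le <|
      sum_le_sum_of_subset_of_nonneg (fun j hj => mem_filter.2 ⟨mem_univ j, hc t ht j hj⟩)
        fun j _ _ => hW.1 k j
  obtain ⟨T', hT'⟩ := eventually_atTop.1
    ((hu.eventually_le_add_of_med_le hmed (half_pos hε)).and (eventually_ge_atTop T))
  have hc' : ∀ t ≥ T', ∀ j ∈ insert k S, u t j ≤ c + ε / 2 := fun t ht j hj => by
    rcases mem_insert.1 hj with rfl | hj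
    · exact (hT' t ht).1
    · linarith [hc t (hT' t ht).2 j hj]
  filter_upwards [IsSolution.eventually_le_of_cohesive hmax hu (insert_nonempty k S)
    (hcoh.insert hW hk.le) hc' (half_pos hε)] with t ht j
  linarith [ht j]
termination_by Sᶜ.card
decreasing_by
  rw [compl_insert]
  exact card_erase_lt_of_mem (mem_compl.2 hkS)

lemma IsSolution.exists_le_of_cohesive
    (hmax : ∀ M : Finset (Fin n), M.Nonempty → MaxCohesive W M → M = univ)
    (hu : IsSolution Med u) {β : ℝ} (hβ : ∀ t, ∃ j, β ≤ u t j) {S : Finset (Fin n)}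
    (hS : S.Nonempty) (hcoh : Cohesive W S) (t : ℝ) : ∃ j ∈ S, β ≤ u t j := by
  by_contra! h
  have hc : ∀ τ ≥ t, ∀ j ∈ S, u τ j ≤ S.sup' hS (u t ·) := fun τ hτ j hj =>
    hu.apply_le_of_cohesive hW hMed hcoh hτ (fun i hi => le_sup' (u t ·) hi) hj
  have hlt : S.sup' hS (u t ·) < β := (sup'_lt_iff hS).2 h
  obtain ⟨τ, hτ⟩ := (hu.eventually_le_of_cohesive hW hMed hmax hS hcoh hc
    (half_pos (sub_pos.2 hlt))).exists
  obtain ⟨j, hj⟩ := hβ τ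
  linarith [hτ j]

lemma IsSolution.cohesive_filter_eq (hu : IsSolution Med u) {α t : ℝ}
    (hα : ∀ᶠ s in 𝓝 t, ∀ j, α ≤ u s j) : Cohesive W (univ.filter fun j => u t j = α) := by
  intro i hi
  have hi' : u t i = α := (mem_filter.1 hi).2
  have hmin : IsLocalMin (fun s => u s i) t := hα.mono fun s hs => hi'.trans_le (hs i)
  have hmed : Med (u t) i = α := by
    linarith [hmin.hasDerivAt_eq_zero (hu.hasDerivAt_apply i t)]
  have hup := (hMed (u t) i).1.2.2
  have hcompl : univ.filter (fun j => α < u t j) = (univ.filter fun j => u t j = α)ᶜ := by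
    ext j
    simp only [mem_filter, mem_univ, true_and, mem_compl]
    exact ⟨fun h => h.ne', fun h => (hα.self_of_nhds j).lt_of_ne' h⟩
  rw [hmed, hcompl, hW.sum_compl] at hup
  linarith

/-- `B` is the set of nodes at level `α` at time `1` of the solution started from an ω-limit
point of `u`. -/
lemma IsSolution.exists_cohesive_tendsto {φ : (Fin n → ℝ) → ℝ → (Fin n → ℝ)}
    (hφ : IsFlow (fun x => Med x - x) φ) (hu : IsSolution Med u) {K : Set (Fin n → ℝ)}
    (hK : IsCompact K) (huK : ∀ t ≥ 0, u t ∈ K) {lo : ℝ → ℝ} {α : ℝ}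
    (hlo : Tendsto lo atTop (𝓝 α)) (hlo_le : ∀ t j, lo t ≤ u t j) (hmin : ∀ t, ∃ j, u t j ≤ α) :
    ∃ B : Finset (Fin n), B.Nonempty ∧ Cohesive W B ∧
      ∃ τ : ℕ → ℝ, ∀ j ∈ B, Tendsto (fun k => u (τ k) j) atTop (𝓝 α) := by
  obtain ⟨z, -, σ, hσ, hz⟩ := hK.tendsto_subseq (x := fun k : ℕ => u k)
    fun k => huK k k.cast_nonneg
  have hy := hφ.isSolution z
  have hshift : ∀ s ≥ 0, ∀ j, Tendsto (fun k => u (σ k + s) j) atTop (𝓝 (φ z s j)) :=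
    fun s hs => tendsto_pi_nhds.1 <| hy.tendsto_of_tendsto_zero hW hMed
      (fun k => hu.comp_const_add (σ k)) (by simpa [Function.comp_def, (hφ z).1] using hz) hs
  have hσ' : Tendsto (fun k => (σ k : ℝ)) atTop atTop :=
    tendsto_natCast_atTop_atTop.comp hσ.tendsto_atTop
  have hαy : ∀ s ≥ 0, ∀ j, α ≤ φ z s j := fun s hs j =>
    le_of_tendsto_of_tendsto' (hlo.comp (tendsto_atTop_add_const_right _ s hσ'))
      (hshift s hs j) fun k => hlo_le _ j
  have hB : (univ.filter fun j => φ z 1 j = α).Nonempty := by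
    by_contra! hempty
    have hlt : ∀ j, α < φ z 1 j := fun j =>
      (hαy 1 zero_le_one j).lt_of_ne' fun h => filter_eq_empty_iff.1 hempty (mem_univ j) h
    obtain ⟨k, hk⟩ := (eventually_all.2 fun j =>
      (hshift 1 zero_le_one j).eventually_const_lt (hlt j)).exists
    obtain ⟨j, hj⟩ := hmin (σ k + 1)
    exact (hk j).not_ge hj
  refine ⟨_, hB, hy.cohesive_filter_eq hW hMed ?_, fun k => σ k + 1, fun j hj => ?_⟩
  · filter_upwards [Ioi_mem_nhds zero_lt_one] with s hs using hαy s (le_of_lt hs)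
  · exact (mem_filter.1 hj).2 ▸ hshift 1 zero_le_one j

lemma IsSolution.monotone_inf' (hu : IsSolution Med u) (hne : (univ : Finset (Fin n)).Nonempty) :
    Monotone fun t => univ.inf' hne (u t) := fun _ _ hst => le_inf' _ _ fun _ _ =>
  hu.le_apply_of_cohesive hW hMed hW.cohesive_univ hst (fun j _ => inf'_le _ (mem_univ j))
    (mem_univ _)

lemma IsSolution.antitone_sup' (hu : IsSolution Med u) (hne : (univ : Finset (Fin n)).Nonempty) :
    Antitone fun t => univ.sup' hne (u t) := fun _ _ hst => sup'_le _ _ fun _ _ =>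
  hu.apply_le_of_cohesive hW hMed hW.cohesive_univ hst (fun j _ => le_sup' _ (mem_univ j))
    (mem_univ _)

theorem IsSolution.exists_tendsto_const
    (hmax : ∀ M : Finset (Fin n), M.Nonempty → MaxCohesive W M → M = univ)
    {φ : (Fin n → ℝ) → ℝ → (Fin n → ℝ)} (hφ : IsFlow (fun x => Med x - x) φ)
    (hu : IsSolution Med u) : ∃ c : ℝ, Tendsto u atTop (𝓝 fun _ => c) := by
  rcases isEmpty_or_nonempty (Fin n) with hn | hn
  · exact ⟨0, tendsto_const_nhds.congr fun _ => Subsingleton.elim _ _⟩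
  set lo := fun t => univ.inf' univ_nonempty (u t)
  set hi := fun t => univ.sup' univ_nonempty (u t)
  have hlo_mono : Monotone lo := hu.monotone_inf' hW hMed univ_nonempty
  have hhi_anti : Antitone hi := hu.antitone_sup' hW hMed univ_nonempty
  have hlo_hi : ∀ t, lo t ≤ hi t := fun t =>
    (inf'_le _ (mem_univ (Classical.arbitrary _))).trans (le_sup' (u t) (mem_univ _))
  have hlo_bdd : BddAbove (Set.range lo) := ⟨hi 0, Set.forall_mem_range.2 fun t =>
    (le_total t 0).elim (fun h => (hlo_mono h).trans (hlo_hi 0))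
      fun h => (hlo_hi t).trans (hhi_anti h)⟩
  have hhi_bdd : BddBelow (Set.range hi) := ⟨lo 0, Set.forall_mem_range.2 fun t =>
    (le_total t 0).elim (fun h => (hlo_hi 0).trans (hhi_anti h))
      fun h => (hlo_mono h).trans (hlo_hi t)⟩
  set α := ⨆ t, lo t
  set β := ⨅ t, hi t
  have hα : Tendsto lo atTop (𝓝 α) := tendsto_atTop_ciSup hlo_mono hlo_bdd
  have hβ : Tendsto hi atTop (𝓝 β) := tendsto_atTop_ciInf hhi_anti hhi_bdd
  have hβle : ∀ t, ∃ j, β ≤ u t j := fun t => by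
    obtain ⟨j, -, hj⟩ := exists_mem_eq_sup' univ_nonempty (u t)
    exact ⟨j, hj ▸ ciInf_le hhi_bdd t⟩
  obtain ⟨B, hB, hBcoh, τ, hBα⟩ := hu.exists_cohesive_tendsto hW hMed hφ
    (isCompact_Icc (a := fun _ => lo 0) (b := fun _ => hi 0))
    (fun t ht => ⟨fun j => (hlo_mono ht).trans (inf'_le _ (mem_univ j)),
      fun j => (le_sup' (u t) (mem_univ j)).trans (hhi_anti ht)⟩)
    hα (fun t j => inf'_le _ (mem_univ j)) fun t => by
      obtain ⟨j, -, hj⟩ := exists_mem_eq_inf' univ_nonempty (u t)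
      exact ⟨j, hj ▸ le_ciSup hlo_bdd t⟩
  have hβα : β ≤ α := by
    by_contra! h
    obtain ⟨k, hk⟩ := ((eventually_all_finset B).2 fun j hj =>
      (hBα j hj).eventually_lt_const h).exists
    obtain ⟨j, hj, hβj⟩ := hu.exists_le_of_cohesive hW hMed hmax hβle hB hBcoh (τ k)
    exact (hk j hj).not_ge hβj
  have hαβ : α = β := le_antisymm (le_of_tendsto_of_tendsto' hα hβ hlo_hi) hβα
  exact ⟨α, tendsto_pi_nhds.2 fun i => tendsto_of_tendsto_of_tendsto_of_le_of_le hα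
    (hαβ ▸ hβ) (fun t => inf'_le _ (mem_univ i)) fun t => le_sup' _ (mem_univ i)⟩

theorem IsFlow.exists_not_tendsto_const {φ : (Fin n → ℝ) → ℝ → (Fin n → ℝ)}
    (hφ : IsFlow (fun x => Med x - x) φ) {M : Finset (Fin n)} (hM : M.Nonempty)
    (hMmax : MaxCohesive W M) (hMu : M ≠ univ) :
    ∃ x₀, ∀ c : ℝ, ¬ Tendsto (φ x₀) atTop (𝓝 fun _ => c) := by
  classical
  obtain ⟨i, hi⟩ := hM
  obtain ⟨j, hj⟩ : ∃ j, j ∉ M := by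
    by_contra! h
    exact hMu (eq_univ_iff_forall.2 h)
  set x₀ : Fin n → ℝ := fun k => if k ∈ M then 1 else 0
  have hu := hφ.isSolution x₀
  refine ⟨x₀, fun c hc => ?_⟩
  have hci : 1 ≤ c := ge_of_tendsto (tendsto_pi_nhds.1 hc i) <| eventually_atTop.2 ⟨0, fun t ht =>
    hu.le_apply_of_cohesive hW hMed hMmax.1 ht (fun k hk => by simp [(hφ x₀).1, x₀, hk]) hi⟩
  have hcj : c ≤ 0 := le_of_tendsto (tendsto_pi_nhds.1 hc j) <| eventually_atTop.2 ⟨0, fun t ht =>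
    hu.apply_le_of_cohesive hW hMed (hMmax.cohesive_compl hW) ht
      (fun k hk => by simp [(hφ x₀).1, x₀, mem_compl.1 hk]) (mem_compl.2 hj)⟩
  linarith

end Solutions

/-- Graph-theoretic condition for consensus: every solution of the CTWM dynamics
converges to a consensus equilibrium if and only if `V` is the only (nonempty)
maximal cohesive set of `G(W)`. -/
theorem ctwm_consensus_iff {n : ℕ}
    (W : Matrix (Fin n) (Fin n) ℝ) (hW : RowStochastic W)
    (Med : (Fin n → ℝ) → Fin n → ℝ) (hMed : IsMedSelection W Med)
    (φ : (Fin n → ℝ) → ℝ → (Fin n → ℝ))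
    (hφ : IsFlow (fun x => Med x - x) φ) :
    (∀ x0 : Fin n → ℝ, ∃ c : ℝ,
        Tendsto (φ x0) atTop (𝓝 (fun _ : Fin n => c))) ↔
    (∀ M : Finset (Fin n), M.Nonempty → MaxCohesive W M → M = univ) := by
  refine ⟨fun h M hM hMmax => ?_, fun hmax x₀ =>
    (hφ.isSolution x₀).exists_tendsto_const hW hMed hmax hφ⟩
  by_contra hMu
  obtain ⟨x₀, hx₀⟩ := hφ.exists_not_tendsto_const hW hMed hM hMmax hMu
  obtain ⟨c, hc⟩ := h x₀
  exact hx₀ c hc
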